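/- Let V be a commutative unital quantale and (X,a) a V-category. The following are equivalent: (i) X is L-complete: every right adjoint V-module ψ : X ⇸ E is of the form ψ = a(−,x₀) for some x₀ ∈ X; (ii) X is L-injective: for every fully faithful L-dense V-functor i : (A,c) → (B,d) and every V-functor h : A → X there is a V-functor g : B → X with g∘i ≅ h; (iii) the Yoneda functor y : X → X̃ has a pseudo left inverse, i.e. there is a V-functor R : X̃ → X with k ≤ a(R(y(x)),x) and k ≤ a(x,R(y(x))) for all x ∈ X. -/

import Mathlib

/-- The internal hom of a quantale: `u ⊸ v = sSup {z | z * u ≤ v}`. -/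
def qhom {V : Type*} [CommMonoid V] [CompleteLattice V] [IsQuantale V] (u v : V) : V :=
  sSup {z | z * u ≤ v}

lemma one_le_qhom_self {V : Type*} [CommMonoid V] [CompleteLattice V] [IsQuantale V]
    (u : V) : (1 : V) ≤ qhom u u :=
  le_sSup (by simp)

/-- `ψ : X → V` is a V-module `X ⇸ E` (a contravariant V-functor, an element of `X̂`). -/
def IsMod {V : Type*} [CommMonoid V] [CompleteLattice V] [IsQuantale V]
    {X : Type*} (a : X → X → V) (ψ : X → V) : Prop :=
  ∀ x y, a x y * ψ y ≤ ψ x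

/-- `ψ` is tight: `k ≤ ⋁_y ψ y ⊗ ⋀_x (ψ x ⊸ a x y)`. -/
def Tight {V : Type*} [CommMonoid V] [CompleteLattice V] [IsQuantale V]
    {X : Type*} (a : X → X → V) (ψ : X → V) : Prop :=
  (1 : V) ≤ ⨆ y : X, ψ y * ⨅ x : X, qhom (ψ x) (a x y)

/-- `ψ : X ⇸ E` is a right adjoint V-module. -/
def IsRightAdj {V : Type*} [CommMonoid V] [CompleteLattice V] [IsQuantale V]
    {X : Type*} (a : X → X → V) (ψ : X → V) : Prop :=
  ∃ φ : X → V, (∀ x y, φ y * a y x ≤ φ x) ∧ (∀ x y, ψ x * φ y ≤ a x y) ∧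
    (1 : V) ≤ ⨆ x : X, φ x * ψ x

/-- The V-category `X̃` of tight presheaves on `(X,a)`. -/
def Tilde {V : Type*} [CommMonoid V] [CompleteLattice V] [IsQuantale V]
    {X : Type*} (a : X → X → V) : Type _ :=
  {ψ : X → V // IsMod a ψ ∧ Tight a ψ}

/-- The V-category structure on `X̃`: `â(ψ,ψ') = ⋀_x (ψ x ⊸ ψ' x)`. -/
def ahat {V : Type*} [CommMonoid V] [CompleteLattice V] [IsQuantale V]
    {X : Type*} (a : X → X → V) (ψ ψ' : Tilde a) : V :=
  ⨅ x : X, qhom (ψ.1 x) (ψ'.1 x)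

/-- The Yoneda functor `X → X̃`, `x ↦ a (−, x)`. -/
def yonedaT {V : Type*} [CommMonoid V] [CompleteLattice V] [IsQuantale V]
    {X : Type*} (a : X → X → V) (ha1 : ∀ x, (1 : V) ≤ a x x)
    (ha2 : ∀ x y z, a x y * a y z ≤ a x z) (x : X) : Tilde a :=
  ⟨fun z => a z x, fun z w => ha2 z w x, by
    unfold Tight
    refine le_trans ?_ (le_iSup (fun y => a y x * ⨅ z : X, qhom (a z x) (a z y)) x)
    have h1 : (1 : V) ≤ a x x := ha1 x
    have h2 : (1 : V) ≤ ⨅ z : X, qhom (a z x) (a z x) :=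
      le_iInf fun z => one_le_qhom_self _
    calc (1 : V) = 1 * 1 := (one_mul 1).symm
      _ ≤ a x x * ⨅ z : X, qhom (a z x) (a z x) := mul_le_mul' h1 h2⟩

/-!
A tight presheaf `ψ` is a right adjoint module, with left adjoint `⋀_z (ψ z ⊸ a(z, −))`; so in an
L-complete `X` every tight presheaf is representable, and choosing representatives gives a pseudo
left inverse `R` of the Yoneda functor. Given such an `R`, an L-dense fully faithful `i : A → B` and
`h : A → X`, every `b ∈ B` yields the tight presheaf `ψ_b = ⋁_p a(−, h p) ⊗ d(i p, b)`, with
`ψ_{i p} = a(−, h p)`, and `g = R ∘ ψ` extends `h`. Conversely, an adjunction `φ ⊣ ψ` is the same as a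
one-point extension of `X` in which `X` is L-dense, with `ψ` and `φ` as distances to and from the
new point; extending the identity of `X` along it, the image of the new point represents `ψ`.
-/

section Residuation

variable {V : Type*} [CommMonoid V] [CompleteLattice V] [IsQuantale V]

lemma le_qhom_iff {z u v : V} : z ≤ qhom u v ↔ z * u ≤ v :=
  Quantale.leftMulResiduation_le_iff_mul_le

lemma qhom_mul_le (u v : V) : qhom u v * u ≤ v := le_qhom_iff.1 le_rfl

lemma le_of_le_qhom {z u v : V} (hz : z ≤ qhom u v) (hu : 1 ≤ u) : z ≤ v :=
  calc z = z * 1 := (mul_one z).symm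
    _ ≤ z * u := mul_le_mul_right hu z
    _ ≤ v := le_qhom_iff.1 hz

end Residuation

section VCategory

variable {V : Type*} [CommMonoid V] [CompleteLattice V] [IsQuantale V] {X : Type*}
  {a : X → X → V}

lemma le_of_one_le_left (ha2 : ∀ x y z, a x y * a y z ≤ a x z) {x y : X} (hxy : 1 ≤ a x y)
    (z : X) : a y z ≤ a x z :=
  calc a y z = 1 * a y z := (one_mul _).symm
    _ ≤ a x y * a y z := mul_le_mul_left hxy _
    _ ≤ a x z := ha2 x y z

lemma le_of_one_le_right (ha2 : ∀ x y z, a x y * a y z ≤ a x z) {y z : X} (hyz : 1 ≤ a y z)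
    (x : X) : a x y ≤ a x z :=
  calc a x y = a x y * 1 := (mul_one _).symm
    _ ≤ a x y * a y z := mul_le_mul_right hyz _
    _ ≤ a x z := ha2 x y z

lemma IsMod.eq_iSup (ha1 : ∀ x, (1 : V) ≤ a x x) {ψ : X → V} (hψ : IsMod a ψ) (x : X) :
    ψ x = ⨆ p, a x p * ψ p :=
  le_antisymm (le_iSup_of_le x (by simpa using mul_le_mul_left (ha1 x) (ψ x))) (iSup_le (hψ x))

lemma eq_iSup_of_covariant (ha1 : ∀ x, (1 : V) ≤ a x x) {φ : X → V}
    (hφ : ∀ x y, φ y * a y x ≤ φ x) (y : X) : φ y = ⨆ p, φ p * a p y :=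
  le_antisymm (le_iSup_of_le y (by simpa using mul_le_mul_right (ha1 y) (φ y))) (iSup_le (hφ y))

end VCategory

section Collage

variable {V : Type*} [CommMonoid V] [CompleteLattice V] {X : Type*} {a : X → X → V}
  {ψ φ : X → V}

-- The point `none` is the representing object of `ψ` that `X` may lack.
def collage (a : X → X → V) (ψ φ : X → V) : Option X → Option X → V
  | some x, some y => a x y
  | some x, none => ψ x
  | none, some y => φ y
  | none, none => ⨆ z, φ z * ψ z

lemma collage_refl (ha1 : ∀ x, (1 : V) ≤ a x x) (hunit : 1 ≤ ⨆ z, φ z * ψ z) :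
    ∀ b, 1 ≤ collage a ψ φ b b
  | some x => ha1 x
  | none => hunit

end Collage

section Adjunction

variable {V : Type*} [CommMonoid V] [CompleteLattice V] [IsQuantale V] {X : Type*}
  {a : X → X → V} {ψ φ : X → V}

lemma mul_unit_le (hψ : IsMod a ψ) (hadj : ∀ x y, ψ x * φ y ≤ a x y) (x : X) :
    ψ x * ⨆ z, φ z * ψ z ≤ ψ x := by
  rw [Quantale.mul_iSup_distrib]
  exact iSup_le fun z =>
    calc ψ x * (φ z * ψ z) = ψ x * φ z * ψ z := (mul_assoc _ _ _).symm
      _ ≤ a x z * ψ z := mul_le_mul_left (hadj x z) _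
      _ ≤ ψ x := hψ x z

lemma unit_mul_le (hφ : ∀ x y, φ y * a y x ≤ φ x) (hadj : ∀ x y, ψ x * φ y ≤ a x y) (y : X) :
    (⨆ z, φ z * ψ z) * φ y ≤ φ y := by
  rw [Quantale.iSup_mul_distrib]
  exact iSup_le fun z =>
    calc φ z * ψ z * φ y = φ z * (ψ z * φ y) := mul_assoc _ _ _
      _ ≤ φ z * a z y := mul_le_mul_right (hadj z y) _
      _ ≤ φ y := hφ y z

lemma le_of_leftAdjoint_le (ha2 : ∀ x y z, a x y * a y z ≤ a x z) (hψ : IsMod a ψ)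
    (hunit : 1 ≤ ⨆ z, φ z * ψ z) {x₀ : X} (hx₀ : ∀ y, φ y ≤ a x₀ y) (x : X) :
    a x x₀ ≤ ψ x :=
  calc a x x₀ ≤ a x x₀ * ⨆ z, φ z * ψ z := by simpa using mul_le_mul_right hunit (a x x₀)
    _ = ⨆ z, a x x₀ * φ z * ψ z := by simp only [Quantale.mul_iSup_distrib, mul_assoc]
    _ ≤ ψ x := iSup_le fun z =>
      calc a x x₀ * φ z * ψ z ≤ a x x₀ * a x₀ z * ψ z :=
            mul_le_mul_left (mul_le_mul_right (hx₀ z) _) _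
        _ ≤ a x z * ψ z := mul_le_mul_left (ha2 _ _ _) _
        _ ≤ ψ x := hψ x z

lemma iInf_qhom_mul_le (ψ : X → V) (x y : X) : (⨅ z, qhom (ψ z) (a z y)) * ψ x ≤ a x y :=
  (mul_le_mul_left (iInf_le _ x) _).trans (qhom_mul_le _ _)

lemma isRightAdj_of_tight (ha2 : ∀ x y z, a x y * a y z ≤ a x z) (ht : Tight a ψ) : IsRightAdj a ψ := by
  refine ⟨fun y => ⨅ z, qhom (ψ z) (a z y), fun x y => le_iInf fun z => le_qhom_iff.2 ?_,
    fun x y => ?_, ht.trans (iSup_mono fun y => (mul_comm _ _).le)⟩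
  · calc (⨅ w, qhom (ψ w) (a w y)) * a y x * ψ z = (⨅ w, qhom (ψ w) (a w y)) * ψ z * a y x :=
          mul_right_comm _ _ _
      _ ≤ a z y * a y x := mul_le_mul_left (iInf_qhom_mul_le ψ z y) _
      _ ≤ a z x := ha2 z y x
  · rw [mul_comm]
    exact iInf_qhom_mul_le ψ x y

lemma collage_trans (ha2 : ∀ x y z, a x y * a y z ≤ a x z) (hψ : IsMod a ψ)
    (hφ : ∀ x y, φ y * a y x ≤ φ x) (hadj : ∀ x y, ψ x * φ y ≤ a x y) :
    ∀ b b' b'', collage a ψ φ b b' * collage a ψ φ b' b'' ≤ collage a ψ φ b b''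
  | some x, some y, some z => ha2 x y z
  | some x, some y, none => hψ x y
  | some x, none, some z => hadj x z
  | some x, none, none => mul_unit_le hψ hadj x
  | none, some y, some z => hφ z y
  | none, some y, none => le_iSup (fun z => φ z * ψ z) y
  | none, none, some z => unit_mul_le hφ hadj z
  | none, none, none => by
      show (⨆ z, φ z * ψ z) * (⨆ z, φ z * ψ z) ≤ ⨆ z, φ z * ψ z
      rw [Quantale.mul_iSup_distrib]
      exact iSup_mono fun z => (mul_assoc _ _ _).symm.le.trans
        (mul_le_mul_left (unit_mul_le hφ hadj z) _)

lemma collage_eq_iSup (ha1 : ∀ x, (1 : V) ≤ a x x) (ha2 : ∀ x y z, a x y * a y z ≤ a x z)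
    (hψ : IsMod a ψ) (hφ : ∀ x y, φ y * a y x ≤ φ x) :
    ∀ b b', collage a ψ φ b b' = ⨆ p, collage a ψ φ b (some p) * collage a ψ φ (some p) b'
  | some x, some y => IsMod.eq_iSup ha1 (fun z w => ha2 z w y) x
  | some x, none => hψ.eq_iSup ha1 x
  | none, some y => eq_iSup_of_covariant ha1 hφ y
  | none, none => rfl

end Adjunction

section Extension

variable {V : Type*} [CommMonoid V] [CompleteLattice V] [IsQuantale V] {X A B : Type*}
  {a : X → X → V} {d : B → B → V} {i : A → B} {h : A → X}

def extensionMod (a : X → X → V) (d : B → B → V) (i : A → B) (h : A → X) (b : B) : X → V :=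
  fun z => ⨆ p, a z (h p) * d (i p) b

lemma isMod_extensionMod (ha2 : ∀ x y z, a x y * a y z ≤ a x z) (b : B) :
    IsMod a (extensionMod a d i h b) := fun z w => by
  simp only [extensionMod, Quantale.mul_iSup_distrib]
  exact iSup_mono fun p => (mul_assoc _ _ _).symm.le.trans (mul_le_mul_left (ha2 _ _ _) _)

lemma mul_extensionMod_le (hd2 : ∀ b b' b'', d b b' * d b' b'' ≤ d b b'') (b b' : B) (z : X) :
    d b b' * extensionMod a d i h b z ≤ extensionMod a d i h b' z := by
  simp only [extensionMod, Quantale.mul_iSup_distrib]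
  exact iSup_mono fun p =>
    calc d b b' * (a z (h p) * d (i p) b) = a z (h p) * (d (i p) b * d b b') := by ac_rfl
      _ ≤ a z (h p) * d (i p) b' := mul_le_mul_right (hd2 _ _ _) _

lemma extensionMod_mul_le (ha2 : ∀ x y z, a x y * a y z ≤ a x z)
    (hd2 : ∀ b b' b'', d b b' * d b' b'' ≤ d b b'')
    (hih : ∀ p q, d (i p) (i q) ≤ a (h p) (h q)) (b : B) (z : X) (p : A) :
    extensionMod a d i h b z * d b (i p) ≤ a z (h p) := by
  rw [extensionMod, Quantale.iSup_mul_distrib]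
  exact iSup_le fun q =>
    calc a z (h q) * d (i q) b * d b (i p) = a z (h q) * (d (i q) b * d b (i p)) := mul_assoc _ _ _
      _ ≤ a z (h q) * a (h q) (h p) := mul_le_mul_right ((hd2 _ _ _).trans (hih q p)) _
      _ ≤ a z (h p) := ha2 _ _ _

lemma extensionMod_image (ha2 : ∀ x y z, a x y * a y z ≤ a x z) (hd1 : ∀ b, (1 : V) ≤ d b b)
    (hd2 : ∀ b b' b'', d b b' * d b' b'' ≤ d b b'')
    (hih : ∀ p q, d (i p) (i q) ≤ a (h p) (h q)) (p : A) :
    extensionMod a d i h (i p) = fun z => a z (h p) := by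
  funext z
  refine le_antisymm ?_ (le_iSup_of_le p (by simpa using mul_le_mul_right (hd1 (i p)) (a z (h p))))
  calc extensionMod a d i h (i p) z ≤ extensionMod a d i h (i p) z * d (i p) (i p) := by
        simpa using mul_le_mul_right (hd1 (i p)) (extensionMod a d i h (i p) z)
    _ ≤ a z (h p) := extensionMod_mul_le ha2 hd2 hih _ _ _

lemma tight_extensionMod (ha1 : ∀ x, (1 : V) ≤ a x x) (ha2 : ∀ x y z, a x y * a y z ≤ a x z)
    (hd2 : ∀ b b' b'', d b b' * d b' b'' ≤ d b b'')
    (hih : ∀ p q, d (i p) (i q) ≤ a (h p) (h q)) {b : B}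
    (hb : 1 ≤ ⨆ p, d b (i p) * d (i p) b) : Tight a (extensionMod a d i h b) := by
  refine hb.trans (iSup_le fun p => le_iSup_of_le (h p) ?_)
  rw [mul_comm]
  refine mul_le_mul' ?_ (le_iInf fun x => le_qhom_iff.2 ?_)
  · exact le_iSup_of_le p (by simpa using mul_le_mul_left (ha1 (h p)) (d (i p) b))
  · rw [mul_comm]
    exact extensionMod_mul_le ha2 hd2 hih b x p

end Extension

section Presheaves

variable {V : Type*} [CommMonoid V] [CompleteLattice V] [IsQuantale V] {X : Type*}
  {a : X → X → V}

lemma le_ahat_of_mul_le {ψ ψ' : Tilde a} {u : V} (h : ∀ x, u * ψ.1 x ≤ ψ'.1 x) :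
    u ≤ ahat a ψ ψ' :=
  le_iInf fun x => le_qhom_iff.2 (h x)

lemma ahat_le_of_representable (ha1 : ∀ x, (1 : V) ≤ a x x) {ψ ψ' : Tilde a} {x x' : X}
    (hψ : ∀ z, ψ.1 z = a z x) (hψ' : ∀ z, ψ'.1 z = a z x') : ahat a ψ ψ' ≤ a x x' := by
  have h : ahat a ψ ψ' ≤ qhom (ψ.1 x) (ψ'.1 x) := iInf_le _ x
  rw [hψ, hψ'] at h
  exact le_of_le_qhom h (ha1 x)

end Presheaves

section Equivalence

universe u v w

variable {V : Type w} [CommMonoid V] [CompleteLattice V] [IsQuantale V] {X : Type u}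

def IsLComplete (a : X → X → V) : Prop :=
  ∀ ψ : X → V, IsMod a ψ → IsRightAdj a ψ → ∃ x₀ : X, ∀ x, ψ x = a x x₀

def IsLInjective (a : X → X → V) : Prop :=
  ∀ (A B : Type v) (c : A → A → V) (d : B → B → V),
    (∀ p, (1 : V) ≤ c p p) → (∀ p q r, c p q * c q r ≤ c p r) →
    (∀ p, (1 : V) ≤ d p p) → (∀ p q r, d p q * d q r ≤ d p r) →
    ∀ i : A → B,
      (∀ p q, c p q = d (i p) (i q)) →
      (∀ b b', d b b' = ⨆ p : A, d b (i p) * d (i p) b') →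
      ∀ h : A → X, (∀ p q, c p q ≤ a (h p) (h q)) →
        ∃ g : B → X, (∀ b b', d b b' ≤ a (g b) (g b')) ∧
          (∀ p, (1 : V) ≤ a (g (i p)) (h p)) ∧
          (∀ p, (1 : V) ≤ a (h p) (g (i p)))

def IsPseudoLeftInverse (a : X → X → V) (ha1 : ∀ x, (1 : V) ≤ a x x)
    (ha2 : ∀ x y z, a x y * a y z ≤ a x z) (R : Tilde a → X) : Prop :=
  (∀ ψ ψ' : Tilde a, ahat a ψ ψ' ≤ a (R ψ) (R ψ')) ∧
    ∀ x : X, (1 : V) ≤ a (R (yonedaT a ha1 ha2 x)) x ∧ (1 : V) ≤ a x (R (yonedaT a ha1 ha2 x))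

variable {a : X → X → V}

lemma IsLComplete.exists_isPseudoLeftInverse (ha1 : ∀ x, (1 : V) ≤ a x x)
    (ha2 : ∀ x y z, a x y * a y z ≤ a x z) (hX : IsLComplete a) :
    ∃ R, IsPseudoLeftInverse a ha1 ha2 R := by
  choose R hR using fun ψ : Tilde a => hX ψ.1 ψ.2.1 (isRightAdj_of_tight ha2 ψ.2.2)
  refine ⟨R, fun ψ ψ' => ahat_le_of_representable ha1 (hR ψ) (hR ψ'), fun x => ?_⟩
  have hRx : ∀ z, a z x = a z (R (yonedaT a ha1 ha2 x)) := hR (yonedaT a ha1 ha2 x)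
  exact ⟨(ha1 _).trans (hRx _).ge, (ha1 x).trans (hRx x).le⟩

lemma IsPseudoLeftInverse.isLInjective {ha1 : ∀ x, (1 : V) ≤ a x x}
    {ha2 : ∀ x y z, a x y * a y z ≤ a x z} {R : Tilde a → X}
    (hR : IsPseudoLeftInverse a ha1 ha2 R) : IsLInjective.{u, v, w} a := by
  intro A B c d _ _ hd1 hd2 i hff hdense h hh
  have hih : ∀ p q, d (i p) (i q) ≤ a (h p) (h q) := fun p q => (hff p q).ge.trans (hh p q)
  obtain ⟨Ψ, hΨ⟩ : ∃ Ψ : B → Tilde a, ∀ b, (Ψ b).1 = extensionMod a d i h b :=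
    ⟨fun b => ⟨extensionMod a d i h b, isMod_extensionMod ha2 b,
      tight_extensionMod ha1 ha2 hd2 hih ((hd1 b).trans (hdense b b).le)⟩, fun _ => rfl⟩
  have hΨi : ∀ p, Ψ (i p) = yonedaT a ha1 ha2 (h p) := fun p =>
    Subtype.ext ((hΨ (i p)).trans (extensionMod_image ha2 hd1 hd2 hih p))
  refine ⟨R ∘ Ψ, fun b b' => (le_ahat_of_mul_le fun z => ?_).trans (hR.1 _ _), fun p => ?_,
    fun p => ?_⟩
  · rw [hΨ, hΨ]
    exact mul_extensionMod_le hd2 b b' z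
  · rw [Function.comp_apply, hΨi]
    exact (hR.2 (h p)).1
  · rw [Function.comp_apply, hΨi]
    exact (hR.2 (h p)).2

lemma IsLInjective.isLComplete (ha1 : ∀ x, (1 : V) ≤ a x x)
    (ha2 : ∀ x y z, a x y * a y z ≤ a x z) (hX : IsLInjective.{u, max u w, w} a) :
    IsLComplete a := by
  rintro ψ hψ ⟨φ, hφ, hadj, hunit⟩
  let a' : ULift.{w} X → ULift.{w} X → V := fun p q => a p.down q.down
  obtain ⟨g, hg, hg1, hg2⟩ := hX (ULift.{w} X) (Option (ULift.{w} X)) a'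
    (collage a' (ψ ∘ ULift.down) (φ ∘ ULift.down)) (fun _ => ha1 _) (fun _ _ _ => ha2 _ _ _)
    (collage_refl (fun _ => ha1 _)
      (hunit.trans_eq (iSup_ulift fun p : ULift.{w} X => φ p.down * ψ p.down).symm))
    (collage_trans (fun _ _ _ => ha2 _ _ _) (fun _ _ => hψ _ _) (fun _ _ => hφ _ _)
      fun _ _ => hadj _ _)
    some (fun _ _ => rfl)
    (collage_eq_iSup (fun _ => ha1 _) (fun _ _ _ => ha2 _ _ _) (fun _ _ => hψ _ _)
      fun _ _ => hφ _ _)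
    ULift.down fun _ _ => le_rfl
  refine ⟨g none, fun x => le_antisymm ?_ (le_of_leftAdjoint_le ha2 hψ hunit (fun y => ?_) x)⟩
  · exact (hg (some ⟨x⟩) none).trans (le_of_one_le_left ha2 (hg2 ⟨x⟩) _)
  · exact (hg none (some ⟨y⟩)).trans (le_of_one_le_right ha2 (hg1 ⟨y⟩) _)

end Equivalence

/-- for a V-category `(X,a)` the following are equivalent:
(i) `X` is L-complete; (ii) `X` is L-injective (w.r.t. fully faithful L-dense V-functors);
(iii) the Yoneda functor `X → X̃` has a pseudo left inverse. -/
theorem stmt18 {V : Type w} [CommMonoid V] [CompleteLattice V] [IsQuantale V]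
    {X : Type u}
    (a : X → X → V) (ha1 : ∀ x, (1 : V) ≤ a x x)
    (ha2 : ∀ x y z, a x y * a y z ≤ a x z) :
    List.TFAE
      [ (∀ ψ : X → V, IsMod a ψ → IsRightAdj a ψ → ∃ x₀ : X, ∀ x, ψ x = a x x₀),
        (∀ (A B : Type (max u w)) (c : A → A → V) (d : B → B → V),
          (∀ p, (1 : V) ≤ c p p) → (∀ p q r, c p q * c q r ≤ c p r) →
          (∀ p, (1 : V) ≤ d p p) → (∀ p q r, d p q * d q r ≤ d p r) →
          ∀ i : A → B,
            (∀ p q, c p q = d (i p) (i q)) →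
            (∀ b b', d b b' = ⨆ p : A, d b (i p) * d (i p) b') →
            ∀ h : A → X, (∀ p q, c p q ≤ a (h p) (h q)) →
              ∃ g : B → X, (∀ b b', d b b' ≤ a (g b) (g b')) ∧
                (∀ p, (1 : V) ≤ a (g (i p)) (h p)) ∧
                (∀ p, (1 : V) ≤ a (h p) (g (i p)))),
        (∃ R : Tilde a → X,
          (∀ ψ ψ' : Tilde a, ahat a ψ ψ' ≤ a (R ψ) (R ψ')) ∧
          (∀ x : X, (1 : V) ≤ a (R (yonedaT a ha1 ha2 x)) x ∧
            (1 : V) ≤ a x (R (yonedaT a ha1 ha2 x)))) ] := by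
  tfae_have 1 → 3 := IsLComplete.exists_isPseudoLeftInverse ha1 ha2
  tfae_have 3 → 2 := fun ⟨_, hR⟩ => IsPseudoLeftInverse.isLInjective hR
  tfae_have 2 → 1 := IsLInjective.isLComplete ha1 ha2
  tfae_finish
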